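/- arXiv:2512.06703 — 3 statements merged into one kernel-verified Lean document; each statement's English description precedes it below -/
import Mathlib

section
/- Let g : (0,∞) → (0,∞) be C¹ with 1 ≤ δ ≤ t·g'(t)/g(t) ≤ g₀ for all t > 0, and define the vector field 𝒜(z) = g(|z|)·z/|z| on ℝⁿ \ {0}. Then there exists a constant C = C(n, g₀) > 0 such that for all nonzero z₁, z₂ ∈ ℝⁿ with the segment [z₁,z₂] avoiding 0, |𝒜(z₁) − 𝒜(z₂)| ≤ C · (g(|z₁|+|z₂|)/(|z₁|+|z₂|)) · |z₁ − z₂|. -/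
/-!
Write `φ(t) = g(t)/t`, so that `𝒜(z) = φ(|z|) z`. The lower Lieberman bound `δ ≥ 1` makes `φ`
non-decreasing, and the upper bound gives `t φ'(t) ≤ (g₀ - 1) φ(t)`. For `|z₁| ≤ |z₂|` split
`𝒜(z₁) - 𝒜(z₂) = φ(|z₂|)(z₁ - z₂) + (φ(|z₁|) - φ(|z₂|)) z₁`: the first term is at most
`φ(|z₁| + |z₂|) |z₁ - z₂|` by monotonicity, and the mean value theorem bounds the second by
`(g₀ - 1) φ(|z₁| + |z₂|) (|z₂| - |z₁|)`. Hence `C = g₀` works.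
-/

open Set

section DivSelf

variable {g g' : ℝ → ℝ} {g₀ t : ℝ}

theorem hasDerivAt_div_self (hg : HasDerivAt g (g' t) t) (ht : 0 < t) :
    HasDerivAt (fun s => g s / s) ((t * g' t - g t) / t ^ 2) t :=
  (hg.fun_div (hasDerivAt_id' t) ht.ne').congr_deriv (by ring)

theorem mul_deriv_div_self_le (ht : 0 < t) (hup : t * g' t ≤ g₀ * g t) :
    t * ((t * g' t - g t) / t ^ 2) ≤ (g₀ - 1) * (g t / t) := by
  rw [show t * ((t * g' t - g t) / t ^ 2) = (t * g' t - g t) / t by field_simp,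
    mul_div_assoc', div_le_div_iff_of_pos_right ht]
  linarith

variable (hg : ∀ t, 0 < t → HasDerivAt g (g' t) t) (hlow : ∀ t, 0 < t → g t ≤ t * g' t)
include hg hlow

theorem monotoneOn_div_self : MonotoneOn (fun t => g t / t) (Ioi 0) := by
  have hderiv := fun t (ht : t ∈ Ioi (0 : ℝ)) => hasDerivAt_div_self (hg t ht) ht
  refine monotoneOn_of_hasDerivWithinAt_nonneg (f' := fun t => (t * g' t - g t) / t ^ 2)
    (convex_Ioi 0) (fun t ht => (hderiv t ht).continuousAt.continuousWithinAt) ?_ ?_ <;>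
    rw [interior_Ioi]
  · exact fun t ht => (hderiv t ht).hasDerivWithinAt
  · exact fun t ht => div_nonneg (sub_nonneg.2 (hlow t ht)) (by positivity)

theorem sub_div_self_mul_le (hg₀ : 1 ≤ g₀) (hup : ∀ t, 0 < t → t * g' t ≤ g₀ * g t)
    {a b : ℝ} (ha : 0 < a) (hab : a ≤ b) :
    (g b / b - g a / a) * a ≤ (g₀ - 1) * (g (a + b) / (a + b)) * (b - a) := by
  rcases hab.eq_or_lt with rfl | hab
  · simp
  have hderiv : ∀ t, a ≤ t → HasDerivAt (fun s => g s / s) ((t * g' t - g t) / t ^ 2) t :=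
    fun t ht => hasDerivAt_div_self (hg t (ha.trans_le ht)) (ha.trans_le ht)
  obtain ⟨ξ, ⟨haξ, hξb⟩, hslope⟩ := exists_hasDerivAt_eq_slope (fun s => g s / s) _ hab
    (fun t ht => (hderiv t ht.1).continuousAt.continuousWithinAt)
    (fun t ht => hderiv t ht.1.le)
  have hξ : 0 < ξ := ha.trans haξ
  have hφ : g ξ / ξ ≤ g (a + b) / (a + b) :=
    monotoneOn_div_self hg hlow hξ (show 0 < a + b by linarith) (by linarith)
  have hφ' : 0 ≤ (ξ * g' ξ - g ξ) / ξ ^ 2 :=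
    div_nonneg (sub_nonneg.2 (hlow ξ hξ)) (by positivity)
  calc (g b / b - g a / a) * a = a * ((ξ * g' ξ - g ξ) / ξ ^ 2) * (b - a) := by
        rw [hslope, mul_assoc, div_mul_cancel₀ _ (sub_ne_zero.2 hab.ne'), mul_comm]
    _ ≤ ξ * ((ξ * g' ξ - g ξ) / ξ ^ 2) * (b - a) := by gcongr
    _ ≤ (g₀ - 1) * (g ξ / ξ) * (b - a) := by
        gcongr ?_ * _
        exact mul_deriv_div_self_le hξ (hup ξ hξ)
    _ ≤ (g₀ - 1) * (g (a + b) / (a + b)) * (b - a) := by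
        gcongr

end DivSelf

section RadialField

variable {E : Type*} [NormedAddCommGroup E] [NormedSpace ℝ E] {φ : ℝ → ℝ} {K : ℝ}

theorem norm_smul_sub_smul_le_of_monotoneOn (hK : 0 ≤ K) (hφ : ∀ t, 0 < t → 0 ≤ φ t)
    (hmono : MonotoneOn φ (Ioi 0))
    (hgrowth : ∀ a b, 0 < a → a ≤ b → (φ b - φ a) * a ≤ K * φ (a + b) * (b - a))
    {z₁ z₂ : E} (h₁ : z₁ ≠ 0) (h₂ : z₂ ≠ 0) :
    ‖φ ‖z₁‖ • z₁ - φ ‖z₂‖ • z₂‖ ≤ (1 + K) * φ (‖z₁‖ + ‖z₂‖) * ‖z₁ - z₂‖ := by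
  wlog hle : ‖z₁‖ ≤ ‖z₂‖ generalizing z₁ z₂
  · simpa only [norm_sub_rev, add_comm ‖z₂‖] using this h₂ h₁ (le_of_not_ge hle)
  have hr₁ : 0 < ‖z₁‖ := norm_pos_iff.2 h₁
  have hr₂ : 0 < ‖z₂‖ := hr₁.trans_le hle
  have hsum : 0 < ‖z₁‖ + ‖z₂‖ := by positivity
  have hφ₂ : φ ‖z₂‖ ≤ φ (‖z₁‖ + ‖z₂‖) := hmono hr₂ hsum (by linarith)
  have hφ₁₂ : φ ‖z₁‖ ≤ φ ‖z₂‖ := hmono hr₁ hr₂ hle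
  have hnorm : ‖z₂‖ - ‖z₁‖ ≤ ‖z₁ - z₂‖ := by
    simpa only [norm_sub_rev z₁] using norm_sub_norm_le z₂ z₁
  calc ‖φ ‖z₁‖ • z₁ - φ ‖z₂‖ • z₂‖
      = ‖φ ‖z₂‖ • (z₁ - z₂) + (φ ‖z₁‖ - φ ‖z₂‖) • z₁‖ := by congr 1; module
    _ ≤ φ ‖z₂‖ * ‖z₁ - z₂‖ + (φ ‖z₂‖ - φ ‖z₁‖) * ‖z₁‖ := by
        refine (norm_add_le _ _).trans_eq ?_
        rw [norm_smul, norm_smul, Real.norm_of_nonneg (hφ _ hr₂), Real.norm_of_nonpos (by linarith)]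
        ring
    _ ≤ φ (‖z₁‖ + ‖z₂‖) * ‖z₁ - z₂‖ + K * φ (‖z₁‖ + ‖z₂‖) * (‖z₂‖ - ‖z₁‖) := by
        refine add_le_add (by gcongr) ?_
        linarith [hgrowth _ _ hr₁ hle]
    _ ≤ (1 + K) * φ (‖z₁‖ + ‖z₂‖) * ‖z₁ - z₂‖ := by
        have := mul_nonneg hK (hφ _ hsum)
        nlinarith

end RadialField

theorem stmt7_general (n : ℕ) (g g' : ℝ → ℝ) (δ g₀ : ℝ) (hδ : 1 ≤ δ)
    (hgpos : ∀ t, 0 < t → 0 < g t)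
    (hgderiv : ∀ t, 0 < t → HasDerivAt g (g' t) t)
    (hlieb : ∀ t, 0 < t → δ ≤ t * g' t / g t ∧ t * g' t / g t ≤ g₀)
    (A : EuclideanSpace ℝ (Fin n) → EuclideanSpace ℝ (Fin n))
    (hA : ∀ z, z ≠ 0 → A z = (g ‖z‖ / ‖z‖) • z) :
    ∃ C > (0:ℝ), ∀ z₁ z₂ : EuclideanSpace ℝ (Fin n), z₁ ≠ 0 → z₂ ≠ 0 →
      (0:EuclideanSpace ℝ (Fin n)) ∉ segment ℝ z₁ z₂ →
      ‖A z₁ - A z₂‖ ≤ C * (g (‖z₁‖ + ‖z₂‖) / (‖z₁‖ + ‖z₂‖)) * ‖z₁ - z₂‖ := by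
  have hg₀ : 1 ≤ g₀ := hδ.trans ((hlieb 1 one_pos).1.trans (hlieb 1 one_pos).2)
  have hlow : ∀ t, 0 < t → g t ≤ t * g' t := fun t ht => by
    have := (le_div_iff₀ (hgpos t ht)).1 (hlieb t ht).1
    nlinarith [hgpos t ht]
  have hup : ∀ t, 0 < t → t * g' t ≤ g₀ * g t := fun t ht =>
    (div_le_iff₀ (hgpos t ht)).1 (hlieb t ht).2
  refine ⟨g₀, by linarith, fun z₁ z₂ h₁ h₂ _ => ?_⟩
  rw [hA z₁ h₁, hA z₂ h₂]
  have := norm_smul_sub_smul_le_of_monotoneOn (sub_nonneg.2 hg₀)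
    (fun t ht => (div_pos (hgpos t ht) ht).le) (monotoneOn_div_self hgderiv hlow)
    (fun a b ha hab => sub_div_self_mul_le hgderiv hlow hg₀ hup ha hab) h₁ h₂
  rwa [add_sub_cancel] at this

/-- Lemma 2.6 (growthg): for `g` satisfying the Lieberman condition with `δ ≥ 1`
and `𝒜(z) = g(‖z‖) z/‖z‖`, there is `C = C(n,g₀) > 0` such that for all nonzero
`z₁, z₂` whose segment avoids the origin,
`‖𝒜 z₁ − 𝒜 z₂‖ ≤ C (g(‖z₁‖+‖z₂‖)/(‖z₁‖+‖z₂‖)) ‖z₁ − z₂‖`. -/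
theorem stmt7 (n : ℕ) (g g' : ℝ → ℝ) (δ g₀ : ℝ) (hδ : 1 ≤ δ) (hδg₀ : δ ≤ g₀)
    (hgpos : ∀ t, 0 < t → 0 < g t)
    (hgderiv : ∀ t, 0 < t → HasDerivAt g (g' t) t)
    (hcont : ContinuousOn g' (Set.Ioi 0))
    (hlieb : ∀ t, 0 < t → δ ≤ t * g' t / g t ∧ t * g' t / g t ≤ g₀)
    (A : EuclideanSpace ℝ (Fin n) → EuclideanSpace ℝ (Fin n))
    (hA : ∀ z, z ≠ 0 → A z = (g ‖z‖ / ‖z‖) • z) :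
    ∃ C > (0:ℝ), ∀ z₁ z₂ : EuclideanSpace ℝ (Fin n), z₁ ≠ 0 → z₂ ≠ 0 →
      (0:EuclideanSpace ℝ (Fin n)) ∉ segment ℝ z₁ z₂ →
      ‖A z₁ - A z₂‖ ≤ C * (g (‖z₁‖ + ‖z₂‖) / (‖z₁‖ + ‖z₂‖)) * ‖z₁ - z₂‖ :=
  stmt7_general n g g' δ g₀ hδ hgpos hgderiv hlieb A hA
end

section
/- Let G be an N-function with G' = g satisfying the Lieberman condition δ ≤ t g'(t)/g(t) ≤ g₀ (0 < δ ≤ g₀), and define V_G(z) = (g(|z|)/|z|)^{1/2} z for z ≠ 0 and V_G(0)=0. If δ ≥ 1, then there is a constant C = C(δ, g₀) > 0 such that for all z₁, z₂ ∈ ℝⁿ: G(|z₁ − z₂|) ≤ C·|V_G(z₁) − V_G(z₂)|². -/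
/-!
The lower Lieberman bound with `δ ≥ 1` makes `g(t)/t` nondecreasing, and the upper bound makes
`g(t)/t^{g₀}` nonincreasing, hence `g(2r) ≤ 2^{g₀} g(r)`. By the mean value theorem and the first
monotonicity, `G(s) ≤ s² g(R)/R` whenever `s ≤ R`. Writing `V_G(z) = h(|z|) z` with
`h(r)² = g(r)/r` nondecreasing, if `|z₂| ≤ |z₁| = r` then `h(r) |z₁ - z₂| ≤ 2 |V_G(z₁) - V_G(z₂)|`,
while `|z₁ - z₂| ≤ 2r`; so `G(|z₁ - z₂|) ≤ |z₁ - z₂|² g(2r)/(2r) ≤ 2^{g₀-1} h(r)² |z₁ - z₂|²`.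
-/

open Real Set

section Monotonicity

variable {g g' : ℝ → ℝ}

lemma monotoneOn_div_self_of_le_mul_deriv (hg : ∀ s, 0 < s → HasDerivAt g (g' s) s)
    (hle : ∀ s, 0 < s → g s ≤ s * g' s) : MonotoneOn (fun t => g t / t) (Ioi 0) := by
  have hd : ∀ x, 0 < x → HasDerivAt (fun t => g t / t) ((g' x * x - g x * 1) / x ^ 2) x :=
    fun x hx => (hg x hx).div (hasDerivAt_id x) hx.ne'
  apply monotoneOn_of_deriv_nonneg (convex_Ioi 0)
  · exact HasDerivAt.continuousOn fun x hx => hd x hx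
  · rw [interior_Ioi]
    exact fun x hx => (hd x hx).differentiableAt.differentiableWithinAt
  · rw [interior_Ioi]
    intro x hx
    rw [(hd x hx).deriv]
    exact div_nonneg (by linarith [hle x hx]) (sq_nonneg x)

lemma antitoneOn_div_rpow_of_mul_deriv_le {p : ℝ} (hg : ∀ s, 0 < s → HasDerivAt g (g' s) s)
    (hle : ∀ s, 0 < s → s * g' s ≤ p * g s) : AntitoneOn (fun t => g t / t ^ p) (Ioi 0) := by
  have hd : ∀ x, 0 < x → HasDerivAt (fun t => g t / t ^ p)
      ((g' x * x ^ p - g x * (p * x ^ (p - 1))) / (x ^ p) ^ 2) x :=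
    fun x hx => (hg x hx).div (hasDerivAt_rpow_const (Or.inl hx.ne')) (rpow_pos_of_pos hx p).ne'
  apply antitoneOn_of_deriv_nonpos (convex_Ioi 0)
  · exact HasDerivAt.continuousOn fun x hx => hd x hx
  · rw [interior_Ioi]
    exact fun x hx => (hd x hx).differentiableAt.differentiableWithinAt
  · rw [interior_Ioi]
    intro x hx
    rw [(hd x hx).deriv]
    refine div_nonpos_of_nonpos_of_nonneg ?_ (sq_nonneg _)
    have hpow : x ^ p = x ^ (p - 1) * x := by
      rw [← rpow_add_one hx.ne', sub_add_cancel]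
    have := mul_le_mul_of_nonneg_left (hle x hx) (rpow_pos_of_pos hx (p - 1)).le
    rw [hpow]
    linarith

end Monotonicity

lemma le_rpow_mul_of_antitoneOn_div_rpow {g : ℝ → ℝ} {p c r : ℝ}
    (hφ : AntitoneOn (fun t => g t / t ^ p) (Ioi 0)) (hc : 1 ≤ c) (hr : 0 < r) :
    g (c * r) ≤ c ^ p * g r := by
  have hcr : 0 < c * r := mul_pos (by linarith) hr
  have h : g (c * r) / (c * r) ^ p ≤ g r / r ^ p :=
    hφ (mem_Ioi.2 hr) (mem_Ioi.2 hcr) (le_mul_of_one_le_left hr.le hc)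
  rw [mul_rpow (by linarith) hr.le] at h
  rw [div_le_div_iff₀ (by positivity) (rpow_pos_of_pos hr p), ← mul_assoc,
    mul_le_mul_iff_left₀ (rpow_pos_of_pos hr p)] at h
  linarith

lemma le_sq_mul_div_of_hasDerivAt {G g : ℝ → ℝ} {s R : ℝ} (hG0 : G 0 = 0)
    (hGcont : ContinuousOn G (Ici 0)) (hGderiv : ∀ t, 0 < t → HasDerivAt G (g t) t)
    (hgpos : ∀ t, 0 < t → 0 < g t) (hq : MonotoneOn (fun t => g t / t) (Ioi 0))
    (hs : 0 ≤ s) (hsR : s ≤ R) (hR : 0 < R) : G s ≤ s ^ 2 * (g R / R) := by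
  have hgR : 0 ≤ g R / R := (div_pos (hgpos R hR) hR).le
  rcases hs.eq_or_lt with rfl | hs
  · rw [hG0]; positivity
  obtain ⟨c, ⟨hc0, hcs⟩, hc⟩ := exists_hasDerivAt_eq_slope G g hs
    (hGcont.mono Icc_subset_Ici_self) fun t ht => hGderiv t ht.1
  rw [hG0, sub_zero, sub_zero, eq_div_iff hs.ne'] at hc
  have hgc : g c ≤ s * (g R / R) := by
    calc g c = c * (g c / c) := by field_simp
      _ ≤ s * (g R / R) :=
        mul_le_mul hcs.le (hq hc0 hR (by linarith)) (div_pos (hgpos c hc0) hc0).le hs.le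
  rw [← hc]
  nlinarith

lemma mul_norm_sub_le_two_mul_norm_smul_sub {E : Type*} [NormedAddCommGroup E]
    [NormedSpace ℝ E] {a b : ℝ} {x y : E} (hb : 0 ≤ b) (hba : b ≤ a) (hyx : ‖y‖ ≤ ‖x‖) :
    a * ‖x - y‖ ≤ 2 * ‖a • x - b • y‖ := by
  have ha : 0 ≤ a := hb.trans hba
  have h₁ : a * ‖x - y‖ ≤ ‖a • x - b • y‖ + (a - b) * ‖y‖ := by
    calc a * ‖x - y‖ = ‖a • (x - y)‖ := by rw [norm_smul, Real.norm_of_nonneg ha]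
      _ = ‖(a • x - b • y) - (a - b) • y‖ := by congr 1; module
      _ ≤ ‖a • x - b • y‖ + ‖(a - b) • y‖ := norm_sub_le _ _
      _ = ‖a • x - b • y‖ + (a - b) * ‖y‖ := by
          rw [norm_smul, Real.norm_of_nonneg (sub_nonneg.2 hba)]
  have h₂ : (a - b) * ‖y‖ ≤ ‖a • x - b • y‖ := by
    calc (a - b) * ‖y‖ ≤ a * ‖x‖ - b * ‖y‖ := by nlinarith
      _ = ‖a • x‖ - ‖b • y‖ := by
          rw [norm_smul, norm_smul, Real.norm_of_nonneg ha, Real.norm_of_nonneg hb]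
      _ ≤ ‖a • x - b • y‖ := norm_sub_norm_le _ _
  linarith

lemma apply_norm_sub_le_of_norm_le {E : Type*} [NormedAddCommGroup E] [NormedSpace ℝ E]
    {G g : ℝ → ℝ} {p : ℝ} (hG0 : G 0 = 0) (hGcont : ContinuousOn G (Ici 0))
    (hGderiv : ∀ t, 0 < t → HasDerivAt G (g t) t) (hgpos : ∀ t, 0 < t → 0 < g t)
    (hq : MonotoneOn (fun t => g t / t) (Ioi 0))
    (hdouble : ∀ r, 0 < r → g (2 * r) ≤ 2 ^ p * g r) {x y : E} (hyx : ‖y‖ ≤ ‖x‖) :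
    G ‖x - y‖ ≤ 2 * 2 ^ p * ‖√(g ‖x‖ / ‖x‖) • x - √(g ‖y‖ / ‖y‖) • y‖ ^ 2 := by
  rcases (norm_nonneg x).eq_or_lt with hx | hx
  · obtain rfl : x = 0 := norm_eq_zero.1 hx.symm
    obtain rfl : y = 0 := norm_le_zero_iff.1 (hx ▸ hyx)
    simp [hG0]
  set r := ‖x‖
  have hqr : g ‖y‖ / ‖y‖ ≤ g r / r := by
    rcases (norm_nonneg y).eq_or_lt with hy | hy
    · rw [← hy, div_zero]
      exact (div_pos (hgpos r hx) hx).le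
    · exact hq hy hx hyx
  have hsr : ‖x - y‖ ≤ 2 * r := by linarith [norm_sub_le x y]
  have hscale := mul_norm_sub_le_two_mul_norm_smul_sub (sqrt_nonneg _) (sqrt_le_sqrt hqr) hyx
  calc G ‖x - y‖ ≤ ‖x - y‖ ^ 2 * (g (2 * r) / (2 * r)) :=
        le_sq_mul_div_of_hasDerivAt hG0 hGcont hGderiv hgpos hq (norm_nonneg _) hsr (by linarith)
    _ ≤ ‖x - y‖ ^ 2 * (2 ^ p * g r / (2 * r)) := by gcongr; exact hdouble r hx
    _ = 2 ^ p / 2 * (√(g r / r) * ‖x - y‖) ^ 2 := by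
        rw [mul_pow, sq_sqrt (div_pos (hgpos r hx) hx).le]
        field_simp
    _ ≤ 2 ^ p / 2 * (2 * ‖√(g r / r) • x - √(g ‖y‖ / ‖y‖) • y‖) ^ 2 := by gcongr
    _ = 2 * 2 ^ p * ‖√(g r / r) • x - √(g ‖y‖ / ‖y‖) • y‖ ^ 2 := by ring

theorem stmt10_general (n : ℕ) (G g g' : ℝ → ℝ) (δ g₀ : ℝ) (hδ : 1 ≤ δ)
    (hG0 : G 0 = 0) (hGcont : ContinuousOn G (Set.Ici 0))
    (hGderiv : ∀ s, 0 < s → HasDerivAt G (g s) s)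
    (hgpos : ∀ s, 0 < s → 0 < g s)
    (hgderiv : ∀ s, 0 < s → HasDerivAt g (g' s) s)
    (hlieb : ∀ s, 0 < s → δ ≤ s * g' s / g s ∧ s * g' s / g s ≤ g₀)
    (V : EuclideanSpace ℝ (Fin n) → EuclideanSpace ℝ (Fin n))
    (hV0 : V 0 = 0)
    (hV : ∀ z, z ≠ 0 → V z = Real.sqrt (g ‖z‖ / ‖z‖) • z) :
    ∃ C > (0:ℝ), ∀ z₁ z₂ : EuclideanSpace ℝ (Fin n),
      G ‖z₁ - z₂‖ ≤ C * ‖V z₁ - V z₂‖ ^ 2 := by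
  have hlower : ∀ s, 0 < s → g s ≤ s * g' s := fun s hs => by
    have := (le_div_iff₀ (hgpos s hs)).1 (hlieb s hs).1
    nlinarith [hgpos s hs]
  have hupper : ∀ s, 0 < s → s * g' s ≤ g₀ * g s := fun s hs =>
    (div_le_iff₀ (hgpos s hs)).1 (hlieb s hs).2
  have hdouble : ∀ r, 0 < r → g (2 * r) ≤ 2 ^ g₀ * g r := fun r hr =>
    le_rpow_mul_of_antitoneOn_div_rpow (antitoneOn_div_rpow_of_mul_deriv_le hgderiv hupper)
      one_le_two hr
  have hbound {x y : EuclideanSpace ℝ (Fin n)} (hyx : ‖y‖ ≤ ‖x‖) :=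
    apply_norm_sub_le_of_norm_le hG0 hGcont hGderiv hgpos
      (monotoneOn_div_self_of_le_mul_deriv hgderiv hlower) hdouble hyx
  have hVsmul : ∀ z, V z = √(g ‖z‖ / ‖z‖) • z := fun z => by
    rcases eq_or_ne z 0 with rfl | hz
    · simp [hV0]
    · exact hV z hz
  refine ⟨2 * 2 ^ g₀, by positivity, fun z₁ z₂ => ?_⟩
  simp only [hVsmul]
  rcases le_total ‖z₂‖ ‖z₁‖ with h | h
  · exact hbound h
  · rw [norm_sub_rev z₁, norm_sub_rev (_ • z₁)]
    exact hbound h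

/-- Inequality (2.12): for `G ∈ 𝒢(δ,g₀)` with `δ ≥ 1`, and
`V_G(z) = (g(‖z‖)/‖z‖)^{1/2} z` (`V_G(0) = 0`), there exists `C = C(δ,g₀) > 0`
such that `G(‖z₁ − z₂‖) ≤ C ‖V_G z₁ − V_G z₂‖²` for all `z₁, z₂`. -/
theorem stmt10 (n : ℕ) (G g g' : ℝ → ℝ) (δ g₀ : ℝ) (hδ : 1 ≤ δ) (hδg₀ : δ ≤ g₀)
    (hG0 : G 0 = 0) (hGcont : ContinuousOn G (Set.Ici 0))
    (hGnonneg : ∀ t, 0 ≤ t → 0 ≤ G t)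
    (hGderiv : ∀ s, 0 < s → HasDerivAt G (g s) s)
    (hgpos : ∀ s, 0 < s → 0 < g s)
    (hgderiv : ∀ s, 0 < s → HasDerivAt g (g' s) s)
    (hlieb : ∀ s, 0 < s → δ ≤ s * g' s / g s ∧ s * g' s / g s ≤ g₀)
    (V : EuclideanSpace ℝ (Fin n) → EuclideanSpace ℝ (Fin n))
    (hV0 : V 0 = 0)
    (hV : ∀ z, z ≠ 0 → V z = Real.sqrt (g ‖z‖ / ‖z‖) • z) :
    ∃ C > (0:ℝ), ∀ z₁ z₂ : EuclideanSpace ℝ (Fin n),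
      G ‖z₁ - z₂‖ ≤ C * ‖V z₁ - V z₂‖ ^ 2 :=
  stmt10_general n G g g' δ g₀ hδ hG0 hGcont hGderiv hgpos hgderiv hlieb V hV0 hV
end

section
/- Let G ∈ 𝒢(δ,g₀) with δ > 0, and define V_G(z) = (g(|z|)/|z|)^{1/2} z (V_G(0)=0), where g = G'. Then there exist constants c₁, c₂ > 0 depending only on δ and g₀ such that for all z₁, z₂ ∈ ℝⁿ: c₁·⟨ (g(|z₁|)/|z₁|)z₁ − (g(|z₂|)/|z₂|)z₂ , z₁ − z₂ ⟩ ≤ |V_G(z₁) − V_G(z₂)|² ≤ c₂·⟨ (g(|z₁|)/|z₁|)z₁ − (g(|z₂|)/|z₂|)z₂ , z₁ − z₂ ⟩. -/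
/-!
Write `a = ‖z₁‖ ≥ b = ‖z₂‖` and `s = ⟪z₁, z₂⟫`. Both `⟪A z₁ - A z₂, z₁ - z₂⟫` and
`‖V z₁ - V z₂‖²` are affine in `s ∈ [-a b, a b]`, so it suffices to compare them at the two
endpoints. After scaling by `g(b) b`, with `u² = a / b` and `v² = g(a) / g(b)`, the endpoint values
are `(u² ∓ 1)(v² ∓ 1)` and `(u v ∓ 1)²`. Integrating `δ ≤ t g'/g ≤ g₀` in `log t` gives
`δ log u ≤ log v ≤ g₀ log u`; together with `1 - x⁻¹ ≤ log x ≤ x - 1` this yields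
`δ (u - 1) ≤ u (v - 1)` and `v - 1 ≤ g₀ v (u - 1)`, which control `(u v - 1)²` by
`(u² - 1)(v² - 1)`.
-/

open Real Set

theorem monotoneOn_sub_mul_log {f f' : ℝ → ℝ} {γ : ℝ}
    (hf : ∀ t, 0 < t → HasDerivAt f (f' t) t) (hγ : ∀ t, 0 < t → γ ≤ t * f' t) :
    MonotoneOn (fun t => f t - γ * log t) (Ioi 0) := by
  have hderiv : ∀ t ∈ Ioi (0 : ℝ),
      HasDerivAt (fun t => f t - γ * log t) (f' t - γ * t⁻¹) t := fun t ht =>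
    (hf t ht).sub ((hasDerivAt_log (ne_of_gt ht)).const_mul γ)
  refine monotoneOn_of_hasDerivWithinAt_nonneg (f' := fun t => f' t - γ * t⁻¹) (convex_Ioi 0)
    (fun t ht => (hderiv t ht).continuousAt.continuousWithinAt) (fun t ht => ?_) (fun t ht => ?_)
  · rw [interior_Ioi] at ht
    exact (hderiv t ht).hasDerivWithinAt
  · rw [interior_Ioi] at ht
    have ht : (0 : ℝ) < t := ht
    rw [sub_nonneg, ← div_eq_mul_inv, div_le_iff₀ ht, mul_comm]
    exact hγ t ht

theorem sub_mem_Icc_of_mul_deriv_mem_Icc {f f' : ℝ → ℝ} {δ g₀ a b : ℝ}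
    (hf : ∀ t, 0 < t → HasDerivAt f (f' t) t) (hf' : ∀ t, 0 < t → t * f' t ∈ Icc δ g₀)
    (hb : 0 < b) (hba : b ≤ a) :
    f a - f b ∈ Icc (δ * (log a - log b)) (g₀ * (log a - log b)) := by
  have ha : 0 < a := hb.trans_le hba
  have hlow := monotoneOn_sub_mul_log hf (fun t ht => (hf' t ht).1) hb ha hba
  have hup := monotoneOn_sub_mul_log (f := fun t => -f t) (f' := fun t => -f' t) (γ := -g₀)
    (fun t ht => (hf t ht).neg) (fun t ht => by linarith [(hf' t ht).2]) hb ha hba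
  simp only at hlow hup
  constructor <;> linarith

theorem sq_sub_one_mul_sq_sub_one_le {u v : ℝ} (hu : 1 ≤ u) (hv : 1 ≤ v) :
    (u ^ 2 - 1) * (v ^ 2 - 1) ≤ 4 * (u * v - 1) ^ 2 := by
  have h₁ : (u - 1) * (v + 1) ≤ 2 * (u * v - 1) := by nlinarith
  have h₂ : (v - 1) * (u + 1) ≤ 2 * (u * v - 1) := by nlinarith
  calc (u ^ 2 - 1) * (v ^ 2 - 1) = ((u - 1) * (v + 1)) * ((v - 1) * (u + 1)) := by ring
    _ ≤ (2 * (u * v - 1)) * (2 * (u * v - 1)) :=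
        mul_le_mul h₁ h₂ (by nlinarith) (by nlinarith)
    _ = 4 * (u * v - 1) ^ 2 := by ring

theorem mul_sub_one_sq_le_of_log_le_log {δ g₀ u v : ℝ} (hδ : 0 < δ) (hg₀ : 0 ≤ g₀)
    (hu : 1 ≤ u) (hv : 0 < v) (hlow : δ * log u ≤ log v) (hup : log v ≤ g₀ * log u) :
    (u * v - 1) ^ 2 ≤ (4 * (1 + g₀) + 2 / δ) * ((u ^ 2 - 1) * (v ^ 2 - 1)) := by
  have hu0 : 0 < u := one_pos.trans_le hu
  have hlogu := log_nonneg hu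
  have hv1 : 1 ≤ v := by
    rw [← log_nonneg_iff hv]
    nlinarith
  have hR : 0 ≤ (u - 1) * (v - 1) := mul_nonneg (by linarith) (by linarith)
  have hvu : δ * (u - 1) ≤ u * (v - 1) := by
    have : δ * (1 - u⁻¹) ≤ v - 1 := by
      nlinarith [one_sub_inv_le_log_of_pos hu0, log_le_sub_one_of_pos hv]
    calc δ * (u - 1) = u * (δ * (1 - u⁻¹)) := by field_simp
      _ ≤ u * (v - 1) := by gcongr
  have huv : v - 1 ≤ g₀ * v * (u - 1) := by
    have : 1 - v⁻¹ ≤ g₀ * (u - 1) := by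
      nlinarith [one_sub_inv_le_log_of_pos hv, log_le_sub_one_of_pos hu0]
    calc v - 1 = v * (1 - v⁻¹) := by field_simp
      _ ≤ v * (g₀ * (u - 1)) := by gcongr
      _ = g₀ * v * (u - 1) := by ring
  have hA : (u - 1) ^ 2 ≤ 1 / δ * ((u ^ 2 - 1) * (v ^ 2 - 1)) := by
    rw [one_div, le_inv_mul_iff₀ hδ]
    nlinarith [mul_le_mul_of_nonneg_left hvu (by linarith : (0 : ℝ) ≤ u - 1)]
  have hB : u ^ 2 * (v - 1) ^ 2 ≤ 2 * (1 + g₀) * ((u ^ 2 - 1) * (v ^ 2 - 1)) := by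
    rcases le_total u 2 with hu2 | hu2
    · have := mul_le_mul_of_nonneg_left huv (by positivity : (0 : ℝ) ≤ u ^ 2 * (v - 1))
      nlinarith [mul_nonneg hg₀ hR, mul_nonneg (mul_nonneg hg₀ hR) (by linarith : (0 : ℝ) ≤ 2 - u)]
    · have hS : 0 ≤ (u ^ 2 - 1) * (v ^ 2 - 1) := mul_nonneg (by nlinarith) (by nlinarith)
      calc u ^ 2 * (v - 1) ^ 2 ≤ (2 * (u ^ 2 - 1)) * ((v - 1) * (v + 1)) :=
            mul_le_mul (by nlinarith) (by nlinarith) (by positivity) (by nlinarith)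
        _ ≤ 2 * (1 + g₀) * ((u ^ 2 - 1) * (v ^ 2 - 1)) := by nlinarith
  calc (u * v - 1) ^ 2 = (u * (v - 1) + (u - 1)) ^ 2 := by ring
    _ ≤ 2 * (u ^ 2 * (v - 1) ^ 2) + 2 * (u - 1) ^ 2 := by
        nlinarith [sq_nonneg (u * (v - 1) - (u - 1))]
    _ ≤ (4 * (1 + g₀) + 2 / δ) * ((u ^ 2 - 1) * (v ^ 2 - 1)) := by
        rw [div_eq_mul_one_div 2 δ]
        nlinarith

theorem sub_mul_nonneg_of_abs_le_one {X Y σ : ℝ} (hσ : |σ| ≤ 1) (h₁ : 0 ≤ X - Y)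
    (h₂ : 0 ≤ X + Y) : 0 ≤ X - Y * σ := by
  rw [abs_le] at hσ
  nlinarith

theorem forms_comparable_normalized {δ g₀ u v σ : ℝ} (hδ : 0 < δ) (hg₀ : 0 ≤ g₀)
    (hu : 1 ≤ u) (hv : 0 < v) (hlow : δ * log u ≤ log v) (hup : log v ≤ g₀ * log u)
    (hσ : |σ| ≤ 1) :
    1 / 4 * (u ^ 2 * v ^ 2 + 1 - (u ^ 2 + v ^ 2) * σ) ≤ u ^ 2 * v ^ 2 + 1 - 2 * (u * v) * σ ∧
      u ^ 2 * v ^ 2 + 1 - 2 * (u * v) * σ ≤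
        (4 * (1 + g₀) + 2 / δ) * (u ^ 2 * v ^ 2 + 1 - (u ^ 2 + v ^ 2) * σ) := by
  have hv1 : 1 ≤ v := by
    rw [← log_nonneg_iff hv]
    nlinarith [log_nonneg hu]
  have hc : 4 ≤ 4 * (1 + g₀) + 2 / δ := by
    have : 0 < 2 / δ := by positivity
    linarith
  constructor
  · have := sub_mul_nonneg_of_abs_le_one hσ (X := 3 / 4 * (u ^ 2 * v ^ 2 + 1))
      (Y := 2 * (u * v) - (u ^ 2 + v ^ 2) / 4)
      (by nlinarith [sq_sub_one_mul_sq_sub_one_le hu hv1])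
      (by nlinarith [mul_le_mul_of_nonneg_left (one_le_pow₀ hv1 : (1 : ℝ) ≤ v ^ 2) (sq_nonneg u),
        mul_le_mul_of_nonneg_right (one_le_pow₀ hu : (1 : ℝ) ≤ u ^ 2) (sq_nonneg v),
        mul_pos (one_pos.trans_le hu) hv])
    linarith
  · set c := 4 * (1 + g₀) + 2 / δ
    have := sub_mul_nonneg_of_abs_le_one hσ (X := (c - 1) * (u ^ 2 * v ^ 2 + 1))
      (Y := c * (u ^ 2 + v ^ 2) - 2 * (u * v))
      (by nlinarith [mul_sub_one_sq_le_of_log_le_log hδ hg₀ hu hv hlow hup])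
      (by nlinarith [sq_nonneg (u * v - 1), sq_nonneg u, sq_nonneg v,
        mul_le_mul_of_nonneg_right hc (by positivity : (0 : ℝ) ≤ u ^ 2 * v ^ 2 + 1)])
    linarith

theorem forms_comparable {δ g₀ a b p q s : ℝ} (hδ : 0 < δ) (hg₀ : 0 ≤ g₀)
    (hp : 0 < p) (hq : 0 < q) (hb : 0 < b) (hba : b ≤ a) (hs : |s| ≤ a * b)
    (hlow : δ * (log a - log b) ≤ log (p ^ 2 * a) - log (q ^ 2 * b))
    (hup : log (p ^ 2 * a) - log (q ^ 2 * b) ≤ g₀ * (log a - log b)) :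
    1 / 4 * (p ^ 2 * a ^ 2 + q ^ 2 * b ^ 2 - (p ^ 2 + q ^ 2) * s) ≤
        p ^ 2 * a ^ 2 + q ^ 2 * b ^ 2 - 2 * (p * q) * s ∧
      p ^ 2 * a ^ 2 + q ^ 2 * b ^ 2 - 2 * (p * q) * s ≤
        (4 * (1 + g₀) + 2 / δ) * (p ^ 2 * a ^ 2 + q ^ 2 * b ^ 2 - (p ^ 2 + q ^ 2) * s) := by
  obtain ⟨u, hu, rfl⟩ : ∃ u, 1 ≤ u ∧ a = b * u ^ 2 :=
    ⟨√(a / b), one_le_sqrt.mpr ((one_le_div hb).mpr hba), by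
      rw [sq_sqrt (div_nonneg (hb.le.trans hba) hb.le)]; field_simp⟩
  have hu0 : 0 < u := one_pos.trans_le hu
  obtain ⟨v, hv, hpv⟩ : ∃ v, 0 < v ∧ p * u = q * v :=
    ⟨p * u / q, by positivity, by field_simp⟩
  obtain ⟨σ, hσ, rfl⟩ : ∃ σ, |σ| ≤ 1 ∧ s = b * u ^ 2 * b * σ := by
    refine ⟨s / (b * u ^ 2 * b), ?_, by field_simp⟩
    rw [abs_div, abs_of_pos (by positivity : (0 : ℝ) < b * u ^ 2 * b)]
    exact div_le_one_of_le₀ hs (by positivity)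
  have hlogu : log (b * u ^ 2) - log b = 2 * log u := by
    rw [log_mul hb.ne' (by positivity), log_pow]; push_cast; ring
  have hlogv : log (p ^ 2 * (b * u ^ 2)) - log (q ^ 2 * b) = 2 * log v := by
    have : p ^ 2 * (b * u ^ 2) = q ^ 2 * b * v ^ 2 := by
      linear_combination b * (p * u + q * v) * hpv
    rw [this, log_mul (by positivity) (by positivity), log_pow]; push_cast; ring
  rw [hlogu, hlogv] at hlow hup
  obtain ⟨h₁, h₂⟩ := forms_comparable_normalized hδ hg₀ hu hv (by linarith) (by linarith) hσ
  have hD : p ^ 2 * (b * u ^ 2) ^ 2 + q ^ 2 * b ^ 2 - (p ^ 2 + q ^ 2) * (b * u ^ 2 * b * σ) =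
      q ^ 2 * b ^ 2 * (u ^ 2 * v ^ 2 + 1 - (u ^ 2 + v ^ 2) * σ) := by
    linear_combination b ^ 2 * (u ^ 2 - σ) * (p * u + q * v) * hpv
  have hE : p ^ 2 * (b * u ^ 2) ^ 2 + q ^ 2 * b ^ 2 - 2 * (p * q) * (b * u ^ 2 * b * σ) =
      q ^ 2 * b ^ 2 * (u ^ 2 * v ^ 2 + 1 - 2 * (u * v) * σ) := by
    linear_combination b ^ 2 * (u ^ 2 * (p * u + q * v) - 2 * q * u * σ) * hpv
  have hqb : 0 ≤ q ^ 2 * b ^ 2 := by positivity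
  rw [hD, hE]
  constructor
  · nlinarith [mul_le_mul_of_nonneg_left h₁ hqb]
  · nlinarith [mul_le_mul_of_nonneg_left h₂ hqb]

section InnerProductSpace

variable {E : Type*} [NormedAddCommGroup E] [InnerProductSpace ℝ E]

theorem inner_sq_smul_sub_smul_sub (p q : ℝ) (z₁ z₂ : E) :
    inner ℝ (p ^ 2 • z₁ - q ^ 2 • z₂) (z₁ - z₂) =
      p ^ 2 * ‖z₁‖ ^ 2 + q ^ 2 * ‖z₂‖ ^ 2 - (p ^ 2 + q ^ 2) * inner ℝ z₁ z₂ := by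
  simp only [inner_sub_left, inner_sub_right, real_inner_smul_left, real_inner_self_eq_norm_sq,
    real_inner_comm z₁ z₂]
  ring

theorem norm_smul_sub_smul_sq {p q : ℝ} (hp : 0 ≤ p) (hq : 0 ≤ q) (z₁ z₂ : E) :
    ‖p • z₁ - q • z₂‖ ^ 2 =
      p ^ 2 * ‖z₁‖ ^ 2 + q ^ 2 * ‖z₂‖ ^ 2 - 2 * (p * q) * inner ℝ z₁ z₂ := by
  rw [norm_sub_sq_real, norm_smul_of_nonneg hp, norm_smul_of_nonneg hq, real_inner_smul_left,
    real_inner_smul_right]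
  ring

theorem inner_smul_self_eq_norm_sqrt_smul_sq {φ : ℝ} (hφ : 0 ≤ φ) (z : E) :
    inner ℝ (φ • z) z = ‖√φ • z‖ ^ 2 := by
  rw [real_inner_smul_left, real_inner_self_eq_norm_sq, norm_smul_of_nonneg (sqrt_nonneg φ),
    mul_pow, sq_sqrt hφ]

theorem inner_div_smul_forms_comparable {g : ℝ → ℝ} {δ g₀ : ℝ} {z₁ z₂ : E} (hδ : 0 < δ)
    (hg₀ : 0 ≤ g₀) (hgpos : ∀ s, 0 < s → 0 < g s) (hz₂ : z₂ ≠ 0) (hz : ‖z₂‖ ≤ ‖z₁‖)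
    (hlog : log (g ‖z₁‖) - log (g ‖z₂‖) ∈
      Icc (δ * (log ‖z₁‖ - log ‖z₂‖)) (g₀ * (log ‖z₁‖ - log ‖z₂‖))) :
    1 / 4 * inner ℝ ((g ‖z₁‖ / ‖z₁‖) • z₁ - (g ‖z₂‖ / ‖z₂‖) • z₂) (z₁ - z₂) ≤
        ‖√(g ‖z₁‖ / ‖z₁‖) • z₁ - √(g ‖z₂‖ / ‖z₂‖) • z₂‖ ^ 2 ∧
      ‖√(g ‖z₁‖ / ‖z₁‖) • z₁ - √(g ‖z₂‖ / ‖z₂‖) • z₂‖ ^ 2 ≤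
        (4 * (1 + g₀) + 2 / δ) *
          inner ℝ ((g ‖z₁‖ / ‖z₁‖) • z₁ - (g ‖z₂‖ / ‖z₂‖) • z₂) (z₁ - z₂) := by
  have hb : 0 < ‖z₂‖ := norm_pos_iff.mpr hz₂
  have ha : 0 < ‖z₁‖ := hb.trans_le hz
  have hφ₁ : 0 < g ‖z₁‖ / ‖z₁‖ := div_pos (hgpos _ ha) ha
  have hφ₂ : 0 < g ‖z₂‖ / ‖z₂‖ := div_pos (hgpos _ hb) hb
  set p := √(g ‖z₁‖ / ‖z₁‖)
  set q := √(g ‖z₂‖ / ‖z₂‖)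
  have hp : p ^ 2 = g ‖z₁‖ / ‖z₁‖ := sq_sqrt hφ₁.le
  have hq : q ^ 2 = g ‖z₂‖ / ‖z₂‖ := sq_sqrt hφ₂.le
  have hg₁ : g ‖z₁‖ = p ^ 2 * ‖z₁‖ := by rw [hp]; field_simp
  have hg₂ : g ‖z₂‖ = q ^ 2 * ‖z₂‖ := by rw [hq]; field_simp
  rw [hg₁, hg₂] at hlog
  rw [← hp, ← hq, inner_sq_smul_sub_smul_sub,
    norm_smul_sub_smul_sq (sqrt_nonneg _) (sqrt_nonneg _)]
  exact forms_comparable hδ hg₀ (sqrt_pos.mpr hφ₁) (sqrt_pos.mpr hφ₂) hb hz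
    (abs_real_inner_le_norm z₁ z₂) hlog.1 hlog.2

end InnerProductSpace

theorem stmt13_general (n : ℕ) (g g' : ℝ → ℝ) (δ g₀ : ℝ) (hδ : 0 < δ) (hδg₀ : δ ≤ g₀)
    (hgpos : ∀ s, 0 < s → 0 < g s)
    (hgderiv : ∀ s, 0 < s → HasDerivAt g (g' s) s)
    (hlieb : ∀ s, 0 < s → δ ≤ s * g' s / g s ∧ s * g' s / g s ≤ g₀)
    (A V : EuclideanSpace ℝ (Fin n) → EuclideanSpace ℝ (Fin n))
    (hA0 : A 0 = 0) (hA : ∀ z, z ≠ 0 → A z = (g ‖z‖ / ‖z‖) • z)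
    (hV0 : V 0 = 0) (hV : ∀ z, z ≠ 0 → V z = Real.sqrt (g ‖z‖ / ‖z‖) • z) :
    ∃ c₁ > (0:ℝ), ∃ c₂ > (0:ℝ), ∀ z₁ z₂ : EuclideanSpace ℝ (Fin n),
      c₁ * inner ℝ (A z₁ - A z₂) (z₁ - z₂) ≤ ‖V z₁ - V z₂‖ ^ 2 ∧
      ‖V z₁ - V z₂‖ ^ 2 ≤ c₂ * inner ℝ (A z₁ - A z₂) (z₁ - z₂) := by
  have hg₀ : 0 ≤ g₀ := hδ.le.trans hδg₀
  have hlog : ∀ a b, 0 < b → b ≤ a →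
      log (g a) - log (g b) ∈ Icc (δ * (log a - log b)) (g₀ * (log a - log b)) :=
    fun a b => sub_mem_Icc_of_mul_deriv_mem_Icc (f' := fun t => g' t / g t)
      (fun t ht => (hgderiv t ht).log (hgpos t ht).ne')
      (fun t ht => by rw [← mul_div_assoc]; exact hlieb t ht)
  have hc : 1 ≤ 4 * (1 + g₀) + 2 / δ := by
    have : 0 < 2 / δ := by positivity
    linarith
  refine ⟨1 / 4, by norm_num, 4 * (1 + g₀) + 2 / δ, by linarith, fun z₁ z₂ => ?_⟩
  wlog hz : ‖z₂‖ ≤ ‖z₁‖ generalizing z₁ z₂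
  · rw [← neg_sub (A z₂), ← neg_sub z₂, inner_neg_neg, norm_sub_rev]
    exact this z₂ z₁ (le_of_not_ge hz)
  by_cases hz₂ : z₂ = 0
  · have hAV : inner ℝ (A z₁) z₁ = ‖V z₁‖ ^ 2 := by
      by_cases hz₁ : z₁ = 0
      · simp [hz₁, hA0, hV0]
      rw [hA z₁ hz₁, hV z₁ hz₁]
      exact inner_smul_self_eq_norm_sqrt_smul_sq
        (div_nonneg (hgpos _ (norm_pos_iff.mpr hz₁)).le (norm_nonneg _)) z₁
    rw [hz₂, hA0, hV0, sub_zero, sub_zero, sub_zero, hAV]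
    constructor <;> nlinarith [sq_nonneg ‖V z₁‖]
  have hz₁ : z₁ ≠ 0 := norm_pos_iff.mp ((norm_pos_iff.mpr hz₂).trans_le hz)
  rw [hA z₁ hz₁, hA z₂ hz₂, hV z₁ hz₁, hV z₂ hz₂]
  exact inner_div_smul_forms_comparable hδ hg₀ hgpos hz₂ hz
    (hlog _ _ (norm_pos_iff.mpr hz₂) hz)

/-- Lemma 2.5 (monotonicity): for `G ∈ 𝒢(δ,g₀)`, `δ > 0`, with
`A(z) = (g(‖z‖)/‖z‖) z` (`A 0 = 0`) and `V_G(z) = (g(‖z‖)/‖z‖)^{1/2} z`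
(`V_G 0 = 0`), there exist `c₁, c₂ > 0` depending only on `δ, g₀` with
`c₁ ⟨A z₁ − A z₂, z₁ − z₂⟩ ≤ ‖V z₁ − V z₂‖² ≤ c₂ ⟨A z₁ − A z₂, z₁ − z₂⟩`. -/
theorem stmt13 (n : ℕ) (G g g' : ℝ → ℝ) (δ g₀ : ℝ) (hδ : 0 < δ) (hδg₀ : δ ≤ g₀)
    (hG0 : G 0 = 0) (hGcont : ContinuousOn G (Set.Ici 0))
    (hGderiv : ∀ s, 0 < s → HasDerivAt G (g s) s)
    (hgpos : ∀ s, 0 < s → 0 < g s)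
    (hgderiv : ∀ s, 0 < s → HasDerivAt g (g' s) s)
    (hlieb : ∀ s, 0 < s → δ ≤ s * g' s / g s ∧ s * g' s / g s ≤ g₀)
    (A V : EuclideanSpace ℝ (Fin n) → EuclideanSpace ℝ (Fin n))
    (hA0 : A 0 = 0) (hA : ∀ z, z ≠ 0 → A z = (g ‖z‖ / ‖z‖) • z)
    (hV0 : V 0 = 0) (hV : ∀ z, z ≠ 0 → V z = Real.sqrt (g ‖z‖ / ‖z‖) • z) :
    ∃ c₁ > (0:ℝ), ∃ c₂ > (0:ℝ), ∀ z₁ z₂ : EuclideanSpace ℝ (Fin n),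
      c₁ * inner ℝ (A z₁ - A z₂) (z₁ - z₂) ≤ ‖V z₁ - V z₂‖ ^ 2 ∧
      ‖V z₁ - V z₂‖ ^ 2 ≤ c₂ * inner ℝ (A z₁ - A z₂) (z₁ - z₂) :=
  stmt13_general n g g' δ g₀ hδ hδg₀ hgpos hgderiv hlieb A V hA0 hA hV0 hV
end
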